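/- arXiv:2605.15317 — 10 statements merged into one kernel-verified Lean document; each statement's English description precedes it below -/
import Mathlib

section
/- For every real number λ with |λ| ≤ 1 and every pair (c,d) ∈ (−1,1)² with (c,d) ≠ (0,0), one has c² + d² − 2c²d² + λ(c³d − cd³) > 0. -/
lemma special_polynomial_aux (c d : ℝ) (hc1 : -1 < c) (hc2 : c < 1) (hd1 : -1 < d)
    (hd2 : d < 1) (hpos : 0 < c^2 + d^2) :
    0 < c^2 + d^2 - 2*c^2*d^2 - (c^3*d - c*d^3) := by
  nlinarith [sq_nonneg (c+d), sq_nonneg (c-d), sq_nonneg (c*d), sq_nonneg (c^2-d^2),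
    mul_nonneg (sq_nonneg (c-d)) (sq_nonneg (c+d)),
    mul_nonneg (sq_nonneg c) (sq_nonneg (c+d)),
    mul_nonneg (sq_nonneg d) (sq_nonneg (c-d)),
    mul_pos (mul_pos (by nlinarith : (0:ℝ) < 1 - c^2) (by nlinarith : (0:ℝ) < 1 - d^2)) hpos,
    mul_nonneg (mul_nonneg (sq_nonneg c) (by nlinarith : (0:ℝ) ≤ 1 - c^2)) (sq_nonneg d),
    mul_nonneg (mul_nonneg (sq_nonneg d) (by nlinarith : (0:ℝ) ≤ 1 - d^2)) (sq_nonneg c)]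

theorem special_polynomial_positive
    (lam c d : ℝ) (hlam : |lam| ≤ 1)
    (hc : c ∈ Set.Ioo (-1 : ℝ) 1) (hd : d ∈ Set.Ioo (-1 : ℝ) 1)
    (hcd : (c, d) ≠ (0, 0)) :
    0 < c^2 + d^2 - 2*c^2*d^2 + lam * (c^3*d - c*d^3) := by
  obtain ⟨hc1, hc2⟩ := hc
  obtain ⟨hd1, hd2⟩ := hd
  obtain ⟨hl1, hl2⟩ := abs_le.mp hlam
  have h0 : c ≠ 0 ∨ d ≠ 0 := by
    by_contra h
    push_neg at h
    exact hcd (by simp [h.1, h.2])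
  have hpos : 0 < c^2 + d^2 := by
    rcases h0 with h | h
    · positivity
    · positivity
  rcases le_or_gt 0 (c^3*d - c*d^3) with ht | ht
  · have h1 := special_polynomial_aux c d hc1 hc2 hd1 hd2 hpos
    nlinarith [mul_nonneg (by linarith : (0:ℝ) ≤ lam + 1) ht]
  · have h2 := special_polynomial_aux d c hd1 hd2 hc1 hc2 (by linarith)
    nlinarith [mul_nonneg (by linarith : (0:ℝ) ≤ 1 - lam) (by linarith : (0:ℝ) ≤ -(c^3*d - c*d^3))]
end

section
/- Let a > 0 and b > 1 be real numbers. Then (b²+1) + a(b²−2b−1) > 0 and a(b²+1) + (b²−2b−1) > 0 hold simultaneously if and only if either b ≥ 1 + √2, or (1+2b−b²)/(b²+1) < a < (b²+1)/(1+2b−b²). -/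
theorem good_parameter_slice (a b : ℝ) (ha : 0 < a) (hb : 1 < b) :
    (0 < (b^2 + 1) + a * (b^2 - 2*b - 1) ∧ 0 < a * (b^2 + 1) + (b^2 - 2*b - 1)) ↔
      (1 + Real.sqrt 2 ≤ b ∨
        ((1 + 2*b - b^2) / (b^2 + 1) < a ∧ a < (b^2 + 1) / (1 + 2*b - b^2))) := by
  have hs : Real.sqrt 2 ^ 2 = 2 := Real.sq_sqrt (by norm_num)
  have hs0 : (0:ℝ) ≤ Real.sqrt 2 := Real.sqrt_nonneg 2
  by_cases h : 1 + Real.sqrt 2 ≤ b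
  · have hc : 0 ≤ b^2 - 2*b - 1 := by nlinarith
    constructor
    · intro _; exact Or.inl h
    · intro _
      constructor <;> nlinarith
  · push_neg at h
    have hd : 0 < 1 + 2*b - b^2 := by nlinarith [sq_nonneg (b - 1 - Real.sqrt 2)]
    have hp : 0 < b^2 + 1 := by positivity
    constructor
    · rintro ⟨h1, h2⟩
      refine Or.inr ⟨?_, ?_⟩
      · rw [div_lt_iff₀ hp]; nlinarith
      · rw [lt_div_iff₀ hd]; nlinarith
    · rintro (hb' | ⟨h1, h2⟩)
      · exact absurd hb' (not_le.mpr h)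
      · rw [div_lt_iff₀ hp] at h1
        rw [lt_div_iff₀ hd] at h2
        constructor <;> nlinarith
end

section
/- For all real b, c, d and all real a ≠ 0 one has a⁴ · ψ(1/a, b, d, c) = −ψ(a, b, c, d), where ψ(a,b,c,d) = (a²−1)(b²+1)(a²b²+a²+ab²−a+b²+1)(c²+d²−2c²d²) + a(b²−1)(a²b²+a²+2ab²−4ab−2a+b²+1)·c·d·(c²−d²). In particular, for a > 0 the numbers ψ(1/a,b,d,c) and ψ(a,b,c,d) have opposite signs (and one vanishes exactly when the other does). -/
noncomputable def psi (a b c d : ℝ) : ℝ :=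
  (a^2 - 1) * (b^2 + 1) * (a^2*b^2 + a^2 + a*b^2 - a + b^2 + 1) * (c^2 + d^2 - 2*c^2*d^2)
    + a * (b^2 - 1) * (a^2*b^2 + a^2 + 2*a*b^2 - 4*a*b - 2*a + b^2 + 1) * c * d * (c^2 - d^2)

theorem psi_inverse_symmetry (b c d : ℝ) :
    (∀ a : ℝ, a ≠ 0 → a^4 * psi (1/a) b d c = - psi a b c d) ∧
    (∀ a : ℝ, 0 < a → Real.sign (psi (1/a) b d c) = - Real.sign (psi a b c d)) := by
  have key : ∀ a : ℝ, a ≠ 0 → a^4 * psi (1/a) b d c = - psi a b c d := by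
    intro a ha
    unfold psi
    field_simp
    ring
  refine ⟨key, fun a ha => ?_⟩
  have ha' : a ≠ 0 := ne_of_gt ha
  have h4 : (0:ℝ) < a^4 := by positivity
  have heq : psi (1/a) b d c = - psi a b c d / a^4 := by
    field_simp
    linarith [key a ha']
  rcases lt_trichotomy (psi a b c d) 0 with h | h | h
  · rw [heq, Real.sign_of_pos (div_pos (by linarith) h4), Real.sign_of_neg h]
    norm_num
  · rw [heq, h]
    simp [Real.sign_zero]
  · rw [heq, Real.sign_of_neg (by
      have : -psi a b c d < 0 := by linarith
      exact div_neg_of_neg_of_pos this h4), Real.sign_of_pos h]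
end

section
/- Fix (c,d) ∈ (−1,1)² with (c,d) ≠ (0,0) and let b > 1. Then: (i) if b < 1 + √2, then ψ((1+2b−b²)/(1+b²), b, c, d) < 0 and ψ((1+b²)/(1+2b−b²), b, c, d) > 0; (ii) if b ≥ 1 + √2, then ψ(0,b,c,d) < 0 and there exists A > 0 such that ψ(a,b,c,d) > 0 for all a ≥ A. -/
theorem mul_add_mul_neg_of_abs_lt {α : Type*} [CommRing α] [LinearOrder α] [IsStrictOrderedRing α]
    {p q r t : α} (hq : 0 < q) (ht : |t| ≤ q) (hr : |r| < -p) :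
    p * q + r * t < 0 := by
  have hrt : r * t ≤ |r| * q :=
    (le_abs_self _).trans (abs_mul r t ▸ mul_le_mul_of_nonneg_left ht (abs_nonneg r))
  nlinarith [mul_lt_mul_of_pos_right hr hq]

theorem one_add_two_mul_sub_sq_pos {b : ℝ} (h₁ : 1 ≤ b) (h₂ : b < 1 + √2) :
    0 < 1 + 2 * b - b ^ 2 := by
  have : (b - 1) ^ 2 < 2 := (Real.lt_sqrt (sub_nonneg.2 h₁)).1 (by linarith)
  linarith

namespace Psi

def P (a b : ℝ) : ℝ := (a^2 - 1) * (b^2 + 1) * (a^2*b^2 + a^2 + a*b^2 - a + b^2 + 1)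

def R (a b : ℝ) : ℝ := a * (b^2 - 1) * (a^2*b^2 + a^2 + 2*a*b^2 - 4*a*b - 2*a + b^2 + 1)

def Q (c d : ℝ) : ℝ := c^2 + d^2 - 2*c^2*d^2

def T (c d : ℝ) : ℝ := c*d*(c^2 - d^2)

variable {a b c d : ℝ}

theorem psi_eq (a b c d : ℝ) : psi a b c d = P a b * Q c d + R a b * T c d := by
  unfold psi P R Q T; ring

theorem Q_pos (hc : c ∈ Set.Ioo (-1 : ℝ) 1) (hd : d ∈ Set.Ioo (-1 : ℝ) 1)
    (hcd : (c, d) ≠ (0, 0)) : 0 < Q c d := by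
  have hc2 : c ^ 2 < 1 := by nlinarith [hc.1, hc.2]
  have hd2 : d ^ 2 < 1 := by nlinarith [hd.1, hd.2]
  have hQ : Q c d = c ^ 2 * (1 - d ^ 2) + d ^ 2 * (1 - c ^ 2) := by unfold Q; ring
  rw [hQ]
  rcases eq_or_ne c 0 with rfl | hc0
  · have hd0 : d ≠ 0 := fun h => hcd (by rw [h])
    have : 0 < d ^ 2 := by positivity
    nlinarith
  · have : 0 < c ^ 2 := by positivity
    nlinarith

theorem abs_T_le_Q (hc : c ∈ Set.Icc (-1 : ℝ) 1) (hd : d ∈ Set.Icc (-1 : ℝ) 1) :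
    |T c d| ≤ Q c d := by
  have hc2 : 0 ≤ 1 - c ^ 2 := by nlinarith [hc.1, hc.2]
  have hd2 : 0 ≤ 1 - d ^ 2 := by nlinarith [hd.1, hd.2]
  -- `2 (Q ∓ T) = (1 - c²)(c ± d)² + (1 - d²)(c ∓ d)² + (c² - d²)²`
  rw [abs_le]
  unfold T Q
  constructor
  · nlinarith [mul_nonneg hc2 (sq_nonneg (c - d)), mul_nonneg hd2 (sq_nonneg (c + d)),
      sq_nonneg (c ^ 2 - d ^ 2)]
  · nlinarith [mul_nonneg hd2 (sq_nonneg (c - d)), mul_nonneg hc2 (sq_nonneg (c + d)),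
      sq_nonneg (c ^ 2 - d ^ 2)]

theorem psi_neg_of_abs_R_lt (hc : c ∈ Set.Ioo (-1 : ℝ) 1) (hd : d ∈ Set.Ioo (-1 : ℝ) 1)
    (hcd : (c, d) ≠ (0, 0)) (h : |R a b| < -P a b) : psi a b c d < 0 := by
  rw [psi_eq]
  exact mul_add_mul_neg_of_abs_lt (Q_pos hc hd hcd)
    (abs_T_le_Q (Set.Ioo_subset_Icc_self hc) (Set.Ioo_subset_Icc_self hd)) h

theorem psi_pos_of_abs_R_lt (hc : c ∈ Set.Ioo (-1 : ℝ) 1) (hd : d ∈ Set.Ioo (-1 : ℝ) 1)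
    (hcd : (c, d) ≠ (0, 0)) (h : |R a b| < P a b) : 0 < psi a b c d := by
  have := mul_add_mul_neg_of_abs_lt (Q_pos hc hd hcd)
    (abs_T_le_Q (Set.Ioo_subset_Icc_self hc) (Set.Ioo_subset_Icc_self hd))
    (show |-R a b| < -(-P a b) by rwa [abs_neg, neg_neg])
  rw [psi_eq]
  linarith

theorem R_eq (a b : ℝ) : R a b = a * (b^2 - 1) * ((b^2 + 1) * (a - 1)^2 + 4*a*b*(b - 1)) := by
  unfold R; ring

theorem R_nonneg (ha : 0 ≤ a) (hb : 1 ≤ b) : 0 ≤ R a b := by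
  have : 0 ≤ b := by linarith
  have : 0 ≤ b - 1 := sub_nonneg.2 hb
  have : 0 ≤ b ^ 2 - 1 := by nlinarith
  rw [R_eq]
  positivity

theorem P_inv (ha : a ≠ 0) (b : ℝ) : P a⁻¹ b = -P a b / a ^ 4 := by
  unfold P; field_simp; ring

theorem R_inv (ha : a ≠ 0) (b : ℝ) : R a⁻¹ b = R a b / a ^ 4 := by
  unfold R; field_simp; ring

theorem P_add_R_left_end (b : ℝ) :
    P ((1 + 2*b - b^2) / (1 + b^2)) b + R ((1 + 2*b - b^2) / (1 + b^2)) b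
      = -(8 * b * (b - 1) * (b + 1) * ((b^2 - b)^2 + (b + 1)^2)) / (1 + b^2)^2 := by
  unfold P R; field_simp; ring

theorem P_add_R_left_end_neg (hb : 1 < b) :
    P ((1 + 2*b - b^2) / (1 + b^2)) b + R ((1 + 2*b - b^2) / (1 + b^2)) b < 0 := by
  have : 0 < b := by linarith
  have : 0 < b - 1 := sub_pos.2 hb
  rw [P_add_R_left_end]
  exact div_neg_of_neg_of_pos (neg_neg_of_pos (by positivity)) (by positivity)

theorem R_lt_P (hb : 1 ≤ b) (ha : 2 ≤ a) : R a b < P a b := by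
  obtain ⟨e, he, rfl⟩ : ∃ e, 0 ≤ e ∧ a = 2 + e := ⟨a - 2, by linarith, by ring⟩
  obtain ⟨f, hf, rfl⟩ : ∃ f, 0 ≤ f ∧ b = 1 + f := ⟨b - 1, by linarith, by ring⟩
  rw [← sub_pos]
  unfold P R
  ring_nf
  positivity

end Psi

open Psi in
theorem wall_lemma (b c d : ℝ)
    (hc : c ∈ Set.Ioo (-1 : ℝ) 1) (hd : d ∈ Set.Ioo (-1 : ℝ) 1)
    (hcd : (c, d) ≠ (0, 0)) (hb : 1 < b) :
    (b < 1 + Real.sqrt 2 →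
      psi ((1 + 2*b - b^2) / (1 + b^2)) b c d < 0 ∧
      0 < psi ((1 + b^2) / (1 + 2*b - b^2)) b c d) ∧
    (1 + Real.sqrt 2 ≤ b →
      psi 0 b c d < 0 ∧ ∃ A : ℝ, 0 < A ∧ ∀ a : ℝ, A ≤ a → 0 < psi a b c d) := by
  refine ⟨fun hb₂ => ?_, fun _ => ⟨?_, 2, two_pos, fun a ha => ?_⟩⟩
  · set a₀ := (1 + 2*b - b^2) / (1 + b^2)
    have ha₀ : 0 < a₀ := div_pos (one_add_two_mul_sub_sq_pos hb.le hb₂) (by positivity)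
    have hR : 0 ≤ R a₀ b := R_nonneg ha₀.le hb.le
    have hPR : P a₀ b + R a₀ b < 0 := P_add_R_left_end_neg hb
    refine ⟨psi_neg_of_abs_R_lt hc hd hcd (by rw [abs_of_nonneg hR]; linarith), ?_⟩
    rw [← inv_div]
    refine psi_pos_of_abs_R_lt hc hd hcd ?_
    rw [P_inv ha₀.ne', R_inv ha₀.ne', abs_of_nonneg (by positivity)]
    exact div_lt_div_of_pos_right (by linarith) (by positivity)
  · refine psi_neg_of_abs_R_lt hc hd hcd ?_
    have hP : P 0 b = -(b ^ 2 + 1) ^ 2 := by unfold P; ring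
    have hR : R 0 b = 0 := by unfold R; ring
    rw [hP, hR, abs_zero, neg_neg]
    positivity
  · refine psi_pos_of_abs_R_lt hc hd hcd ?_
    rw [abs_of_nonneg (R_nonneg (by linarith) hb.le)]
    exact R_lt_P hb.le ha
end

section
/- Fix (c,d) ∈ (−1,1)² with (c,d) ≠ (0,0) and let b > 1. Then there exists exactly one a ∈ S_b such that ψ(a,b,c,d) = 0, where S_b = ((1+2b−b²)/(1+b²), (1+b²)/(1+2b−b²)) if 1 < b < 1+√2 and S_b = (0,∞) if b ≥ 1+√2. -/
noncomputable def Sb (b : ℝ) : Set ℝ :=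
  if b < 1 + Real.sqrt 2 then
    Set.Ioo ((1 + 2*b - b^2) / (b^2 + 1)) ((b^2 + 1) / (1 + 2*b - b^2))
  else Set.Ioi 0

/-!
Write `ψ = A(a)·Q(c,d) + B(a)·K(c,d)`. For `c, d ∈ (-1, 1)` not both zero, `|K| < Q`, and `B(a) > 0`
for `a > 0`, so on `S_b` the zeros of `ψ` are the solutions of `R(a) = -K/Q ∈ (-1, 1)` with
`R = A/B`. Since `A(1/a) = -A(a)/a⁴` and `B(1/a) = B(a)/a⁴`, `R` is odd under `a ↦ 1/a`; it exceeds
`1` at the right end `h` of `S_b` (at `h = b² + 1` when `S_b` is unbounded), and the intermediate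
value theorem on `[1/h, h]` gives a zero. For uniqueness, with `T = b² + 1` and `t = 1 + 2b - b²`
one has `S_b = {x > 0 | t < T x, t x < T}`, and on `S_b × S_b` the difference
`A(y)B(x) - A(x)B(y)` is `(y - x)(b⁴ - 1)` times a positive polynomial, so `R` is strictly
increasing on `S_b`.
-/

open Set

noncomputable def psiA (b a : ℝ) : ℝ :=
  (a^2 - 1) * (b^2 + 1) * ((b^2 + 1) * a^2 + (b^2 - 1) * a + (b^2 + 1))

noncomputable def psiB (b a : ℝ) : ℝ :=
  a * (b^2 - 1) * ((b^2 + 1) * a^2 - 2 * (1 + 2*b - b^2) * a + (b^2 + 1))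

noncomputable def psiQ (c d : ℝ) : ℝ := c^2 + d^2 - 2*c^2*d^2

noncomputable def psiK (c d : ℝ) : ℝ := c * d * (c^2 - d^2)

noncomputable def psiRatio (b a : ℝ) : ℝ := psiA b a / psiB b a

theorem psi_eq (a b c d : ℝ) : psi a b c d = psiA b a * psiQ c d + psiB b a * psiK c d := by
  unfold psi psiA psiB psiQ psiK; ring

section Weights

variable {c d : ℝ}

theorem psiQ_pos (hc : c^2 < 1) (hd : d^2 < 1) (hcd : (c, d) ≠ (0, 0)) : 0 < psiQ c d := by
  have hQ : psiQ c d = c^2 * (1 - d^2) + d^2 * (1 - c^2) := by unfold psiQ; ring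
  rw [hQ]
  have h1 := sub_pos.2 hc
  have h2 := sub_pos.2 hd
  have hc' : 0 ≤ c^2 * (1 - d^2) := by positivity
  have hd' : 0 ≤ d^2 * (1 - c^2) := by positivity
  rcases eq_or_ne c 0 with rfl | hc0
  · have hd0 : d ≠ 0 := by rintro rfl; exact hcd rfl
    have : 0 < d^2 * (1 - 0^2) := by positivity
    linarith
  · have : 0 < c^2 * (1 - d^2) := by positivity
    linarith

theorem abs_psiK_lt_psiQ (hc : c^2 < 1) (hd : d^2 < 1) (hcd : (c, d) ≠ (0, 0)) :
    |psiK c d| < psiQ c d := by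
  have hQ := psiQ_pos hc hd hcd
  refine abs_lt_of_sq_lt_sq ?_ hQ.le
  have key : psiQ c d ^ 2 - psiK c d ^ 2
      = (1 - c^2 * d^2) * psiQ c d ^ 2 + 4 * c^4 * d^4 * (1 - c^2) * (1 - d^2) := by
    unfold psiQ psiK; ring
  have h1 : 0 < (1 - c^2 * d^2) * psiQ c d ^ 2 := by
    have : c^2 * d^2 < 1 := by nlinarith [sq_nonneg c, sq_nonneg d]
    have := sub_pos.2 this
    positivity
  have h2 : 0 ≤ 4 * c^4 * d^4 * (1 - c^2) * (1 - d^2) := by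
    have := sub_pos.2 hc; have := sub_pos.2 hd; positivity
  linarith

end Weights

theorem cross_poly_pos {T t x y : ℝ} (hT : 0 < T) (hx : 0 < x) (hy : 0 < y)
    (hxl : t < T * x) (hxu : t * x < T) (hyl : t < T * y) (hyu : t * y < T) :
    0 < T * (1 + x*y) * ((x + y)^2 + (1 - x*y)^2) - 2 * t * (x + y) * (1 + (x*y)^2) := by
  rcases le_or_gt t 0 with ht | ht
  · have h1 : 0 < T * (1 + x*y) * ((x + y)^2 + (1 - x*y)^2) := by positivity
    have h2 : 0 ≤ -t * (x + y) * (1 + (x*y)^2) := by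
      have := neg_nonneg.2 ht
      positivity
    linarith
  · have hTt : t < T := by nlinarith
    have hu : 0 < T^2 * (x*y) - t^2 := by nlinarith [mul_lt_mul'' hxl hyl ht.le ht.le]
    have hv : 0 < T^2 - t^2 * (x*y) := by
      nlinarith [mul_lt_mul'' hxu hyu (by positivity : 0 ≤ t * x) (by positivity : 0 ≤ t * y)]
    have key : T^3 * (T * (1 + x*y) * ((x + y)^2 + (1 - x*y)^2) - 2 * t * (x + y) * (1 + (x*y)^2))
        = T^2 * (1 + (x*y)^2) * ((T*x - t) * (T*y - t) + (T - t*x) * (T - t*y))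
          + (1 + x*y) * (T^4 * (x - y)^2 + (T^2 * (x*y) - t^2) * (T^2 - t^2 * (x*y))
            + (x*y) * (T^4 - t^4)) := by ring
    have hTt4 : 0 < T^4 - t^4 := by
      have := pow_lt_pow_left₀ hTt ht.le (by norm_num : (4:ℕ) ≠ 0); linarith
    have hxl' := sub_pos.2 hxl
    have hxu' := sub_pos.2 hxu
    have hyl' := sub_pos.2 hyl
    have hyu' := sub_pos.2 hyu
    refine pos_of_mul_pos_right ?_ (by positivity : (0:ℝ) ≤ T^3)
    rw [key]; positivity

section Ratio

variable {b : ℝ}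

theorem psiB_pos (hb : 1 < b) {a : ℝ} (ha : 0 < a) : 0 < psiB b a := by
  have hB : psiB b a = a * (b^2 - 1) * ((b^2 + 1) * (a - 1)^2 + 4 * b * (b - 1) * a) := by
    unfold psiB; ring
  have := sub_pos.2 hb
  have : 0 < b^2 - 1 := by nlinarith
  rw [hB]; positivity

theorem psiRatio_inv (b a : ℝ) : psiRatio b a⁻¹ = -psiRatio b a := by
  rcases eq_or_ne a 0 with rfl | ha
  · simp [psiRatio, psiB]
  · have hA : psiA b a⁻¹ = -psiA b a / a^4 := by unfold psiA; field_simp; ring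
    have hB : psiB b a⁻¹ = psiB b a / a^4 := by unfold psiB; field_simp; ring
    rw [psiRatio, psiRatio, hA, hB, neg_div, neg_div, div_div_div_cancel_right₀ (by positivity)]

theorem continuousOn_psiRatio (hb : 1 < b) : ContinuousOn (psiRatio b) (Ioi 0) := by
  unfold psiRatio
  exact ContinuousOn.div (by unfold psiA; fun_prop) (by unfold psiB; fun_prop)
    fun a ha => (psiB_pos hb ha).ne'

theorem psiA_mul_psiB_sub_psiA_mul_psiB (b x y : ℝ) :
    psiA b y * psiB b x - psiA b x * psiB b y
      = (y - x) * (b^2 - 1) * (b^2 + 1) *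
        ((b^2 + 1) * ((b^2 + 1) * (1 + x*y) * ((x + y)^2 + (1 - x*y)^2)
            - 2 * (1 + 2*b - b^2) * (x + y) * (1 + (x*y)^2))
          + 2 * (b^2 - 1) * (x*y) * ((b^2 + 1) * (x + y) - (1 + 2*b - b^2) * (1 + x*y))) := by
  unfold psiA psiB; ring

theorem lt_one_add_sqrt_two_iff (hb : 1 < b) : b < 1 + √2 ↔ 0 < 1 + 2*b - b^2 := by
  rw [← sub_lt_iff_lt_add', Real.lt_sqrt (by linarith)]
  constructor <;> intro <;> nlinarith

theorem mem_Sb_iff (hb : 1 < b) {x : ℝ} :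
    x ∈ Sb b ↔ 0 < x ∧ 1 + 2*b - b^2 < (b^2 + 1) * x ∧ (1 + 2*b - b^2) * x < b^2 + 1 := by
  have hT : (0:ℝ) < b^2 + 1 := by positivity
  unfold Sb
  split_ifs with h
  · have ht := (lt_one_add_sqrt_two_iff hb).1 h
    rw [mem_Ioo, div_lt_iff₀ hT, lt_div_iff₀ ht]
    constructor
    · rintro ⟨h1, h2⟩
      exact ⟨by nlinarith, by linarith, by linarith⟩
    · rintro ⟨-, h1, h2⟩
      exact ⟨by linarith, by linarith⟩
  · have ht := not_lt.1 (mt (lt_one_add_sqrt_two_iff hb).2 h)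
    rw [mem_Ioi]
    exact ⟨fun hx => ⟨hx, by nlinarith [mul_pos hT hx], by nlinarith⟩, fun hx => hx.1⟩

theorem psiRatio_strictMonoOn (hb : 1 < b) : StrictMonoOn (psiRatio b) (Sb b) := by
  intro x hx y hy hxy
  obtain ⟨hx0, hxl, hxu⟩ := (mem_Sb_iff hb).1 hx
  obtain ⟨hy0, hyl, hyu⟩ := (mem_Sb_iff hb).1 hy
  rw [psiRatio, psiRatio, div_lt_div_iff₀ (psiB_pos hb hx0) (psiB_pos hb hy0), ← sub_pos,
    psiA_mul_psiB_sub_psiA_mul_psiB]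
  have h1 := cross_poly_pos (by positivity) hx0 hy0 hxl hxu hyl hyu
  have h2 : 0 < (b^2 + 1) * (x + y) - (1 + 2*b - b^2) * (1 + x*y) := by
    nlinarith [mul_pos hy0 (sub_pos.2 hxu)]
  have := sub_pos.2 hxy
  have : 0 < b^2 - 1 := by nlinarith
  positivity

theorem exists_one_lt_psiRatio (hb : 1 < b) :
    ∃ h, 1 < h ∧ 1 < psiRatio b h ∧ Ioo h⁻¹ h ⊆ Sb b := by
  have hT : (0:ℝ) < b^2 + 1 := by positivity
  by_cases hsb : b < 1 + √2
  · have ht := (lt_one_add_sqrt_two_iff hb).1 hsb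
    have hTt : 1 + 2*b - b^2 < b^2 + 1 := by nlinarith
    have hh : 1 < (b^2 + 1) / (1 + 2*b - b^2) := (one_lt_div ht).2 hTt
    refine ⟨_, hh, ?_, by rw [Sb, if_pos hsb, inv_div]⟩
    rw [psiRatio, one_lt_div (psiB_pos hb (by linarith)), ← sub_pos]
    have hAB : psiA b ((b^2 + 1) / (1 + 2*b - b^2)) - psiB b ((b^2 + 1) / (1 + 2*b - b^2))
        = (b^2 + 1)^2 * ((b^2 + 1)^2 - (1 + 2*b - b^2)^2) * ((b^2 + 1)^2 + (1 + 2*b - b^2)^2)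
          / (1 + 2*b - b^2)^4 := by
      unfold psiA psiB
      generalize 1 + 2*b - b^2 = t at ht ⊢
      field_simp
      ring
    have : 0 < (b^2 + 1)^2 - (1 + 2*b - b^2)^2 := by nlinarith
    rw [hAB]; positivity
  · have ht := not_lt.1 (mt (lt_one_add_sqrt_two_iff hb).2 hsb)
    refine ⟨b^2 + 1, by nlinarith, ?_, ?_⟩
    · rw [psiRatio, one_lt_div (psiB_pos hb hT), ← sub_pos]
      have hAB : psiA b (b^2 + 1) - psiB b (b^2 + 1)
          = (b^2 + 1)^2 * (b^8 + 4*b^6 + 4*b^4 + 4*b^3 + 2*b^2 + 4*b*(b - 1)) := by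
        unfold psiA psiB; ring
      have := sub_pos.2 hb
      have : 0 < b := by linarith
      rw [hAB]; positivity
    · rw [Sb, if_neg hsb]
      exact fun a ha => (inv_pos.2 hT).trans ha.1

theorem exists_mem_Sb_psiRatio_eq (hb : 1 < b) {r : ℝ} (hr : |r| < 1) :
    ∃ a ∈ Sb b, psiRatio b a = r := by
  obtain ⟨h, hh, hRh, hsub⟩ := exists_one_lt_psiRatio hb
  have hcont : ContinuousOn (psiRatio b) (Icc h⁻¹ h) :=
    (continuousOn_psiRatio hb).mono fun a ha => (inv_pos.2 (by linarith)).trans_le ha.1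
  have hr' : r ∈ Ioo (psiRatio b h⁻¹) (psiRatio b h) := by
    rw [psiRatio_inv]
    obtain ⟨h1, h2⟩ := abs_lt.1 hr
    exact ⟨by linarith, by linarith⟩
  have hle : h⁻¹ ≤ h := (inv_le_one_of_one_le₀ hh.le).trans hh.le
  obtain ⟨a, ha, hra⟩ := intermediate_value_Ioo hle hcont hr'
  exact ⟨a, hsub ha, hra⟩

theorem psi_eq_zero_iff (hb : 1 < b) {a c d : ℝ} (ha : 0 < a) (hQ : 0 < psiQ c d) :
    psi a b c d = 0 ↔ psiRatio b a = -(psiK c d / psiQ c d) := by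
  have hB := psiB_pos hb ha
  have hfactor : psi a b c d = psiB b a * psiQ c d * (psiRatio b a + psiK c d / psiQ c d) := by
    rw [psi_eq, psiRatio]; field_simp
  rw [hfactor, mul_eq_zero, mul_eq_zero, add_eq_zero_iff_eq_neg]
  simp only [hB.ne', hQ.ne', false_or]

end Ratio

theorem unique_zero_in_slice (b c d : ℝ)
    (hc : c ∈ Set.Ioo (-1 : ℝ) 1) (hd : d ∈ Set.Ioo (-1 : ℝ) 1)
    (hcd : (c, d) ≠ (0, 0)) (hb : 1 < b) :
    ∃! a : ℝ, a ∈ Sb b ∧ psi a b c d = 0 := by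
  have hc2 : c^2 < 1 := sq_lt_one_iff_abs_lt_one c |>.2 (abs_lt.2 hc)
  have hd2 : d^2 < 1 := sq_lt_one_iff_abs_lt_one d |>.2 (abs_lt.2 hd)
  have hQ := psiQ_pos hc2 hd2 hcd
  have hr : |-(psiK c d / psiQ c d)| < 1 := by
    rw [abs_neg, abs_div, abs_of_pos hQ, div_lt_one hQ]
    exact abs_psiK_lt_psiQ hc2 hd2 hcd
  have hpos : ∀ {a}, a ∈ Sb b → 0 < a := fun ha => ((mem_Sb_iff hb).1 ha).1
  obtain ⟨a, ha, hra⟩ := exists_mem_Sb_psiRatio_eq hb hr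
  refine ⟨a, ⟨ha, (psi_eq_zero_iff hb (hpos ha) hQ).2 hra⟩, fun a' ⟨ha', h0⟩ => ?_⟩
  exact (psiRatio_strictMonoOn hb).injOn ha' ha
    (((psi_eq_zero_iff hb (hpos ha') hQ).1 h0).trans hra.symm)
end

section
/- For all real numbers b ≥ 1 and all c, d with 0 ≤ c ≤ d < 1, one has ψ(2,b,c,d) ≥ 0, where ψ(a,b,c,d) = (a²−1)(b²+1)(a²b²+a²+ab²−a+b²+1)(c²+d²−2c²d²) + a(b²−1)(a²b²+a²+2ab²−4ab−2a+b²+1)·c·d·(c²−d²). -/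
theorem psi_at_two_nonneg (b c d : ℝ) (hb : 1 ≤ b)
    (hc : 0 ≤ c) (hcd : c ≤ d) (hd : d < 1) :
    0 ≤ psi 2 b c d := by
  have hd0 : 0 ≤ d := le_trans hc hcd
  have hE : c * d * (d^2 - c^2) ≤ c^2 + d^2 - 2*c^2*d^2 := by
    nlinarith [sq_nonneg (c - d), sq_nonneg (c*d), mul_nonneg hc hd0, sq_nonneg d,
      mul_nonneg (mul_nonneg hc hd0) hd0, sq_nonneg (1 - d), sq_nonneg (c + d),
      mul_nonneg (mul_nonneg hc hd0) (sub_nonneg.2 hcd)]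
  have hE0 : 0 ≤ c * d * (d^2 - c^2) := by
    have : c^2 ≤ d^2 := by nlinarith
    nlinarith [mul_nonneg hc hd0]
  have hB : (0:ℝ) ≤ 2 * (b^2 - 1) * (9*b^2 - 8*b + 1) := by nlinarith [sq_nonneg (b-1)]
  have hAB : 2 * (b^2 - 1) * (9*b^2 - 8*b + 1) ≤ 3 * (b^2 + 1) * (7*b^2 + 3) := by
    nlinarith [sq_nonneg b, sq_nonneg (b-1), sq_nonneg (b+1)]
  have key : psi 2 b c d = 3 * (b^2 + 1) * (7*b^2 + 3) * (c^2 + d^2 - 2*c^2*d^2)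
      - 2 * (b^2 - 1) * (9*b^2 - 8*b + 1) * (c * d * (d^2 - c^2)) := by
    unfold psi; ring
  rw [key]
  calc (0:ℝ) ≤ 2 * (b^2 - 1) * (9*b^2 - 8*b + 1) * ((c^2 + d^2 - 2*c^2*d^2) - c * d * (d^2 - c^2)) := by
        have := sub_nonneg.2 hE
        exact mul_nonneg hB this
    _ ≤ _ := by nlinarith [mul_le_mul_of_nonneg_right hAB (le_trans hE0 hE)]
end

section
/- For every real b ≥ 1 and all real c, d with 0 ≤ c ≤ d < 1, there exists a ∈ [1,2] such that ψ(a,b,c,d) = 0, where ψ(a,b,c,d) = (a²−1)(b²+1)(a²b²+a²+ab²−a+b²+1)(c²+d²−2c²d²) + a(b²−1)(a²b²+a²+2ab²−4ab−2a+b²+1)·c·d·(c²−d²). -/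
theorem duality_curve_crosses (b c d : ℝ) (hb : 1 ≤ b)
    (hc : 0 ≤ c) (hcd : c ≤ d) (hd : d < 1) :
    ∃ a ∈ Set.Icc (1 : ℝ) 2, psi a b c d = 0 := by
  have hd0 : 0 ≤ d := hc.trans hcd
  have hb2 : (0:ℝ) ≤ b^2 - 1 := by nlinarith
  have h1 : psi 1 b c d ≤ 0 := by
    unfold psi
    nlinarith [mul_nonneg (mul_nonneg hb2 (by nlinarith : (0:ℝ) ≤ 4*b*(b-1)))
      (mul_nonneg (mul_nonneg hc hd0) (by nlinarith : (0:ℝ) ≤ d^2 - c^2))]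
  have h2 : 0 ≤ psi 2 b c d := by
    unfold psi
    have key : c * d * (d^2 - c^2) ≤ c^2 + d^2 - 2*c^2*d^2 := by
      nlinarith [sq_nonneg (c - d), sq_nonneg (c + d), sq_nonneg (c*d),
        mul_nonneg hc hd0, sq_nonneg (1 - c*d), mul_nonneg (mul_nonneg hc hd0) hd0,
        mul_nonneg (mul_nonneg (mul_nonneg hc hd0) hd0) hd0]
    have hcoef : 2*(b^2-1)*(9*b^2-8*b+1) ≤ 3*(b^2+1)*(7*b^2+3) := by
      nlinarith [sq_nonneg (b-1), sq_nonneg (b+1), sq_nonneg b, sq_nonneg (b^2-1)]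
    have hcd1 : c*d < 1 := by nlinarith
    have hcd2 : (0:ℝ) ≤ c^2 + d^2 - 2*c^2*d^2 := by
      nlinarith [sq_nonneg (c-d), mul_nonneg hc hd0, hcd1]
    have h9 : (0:ℝ) ≤ 9*b^2-8*b+1 := by nlinarith
    have hcoef2 : (0:ℝ) ≤ 2*(b^2-1)*(9*b^2-8*b+1) := by
      nlinarith [mul_nonneg hb2 h9]
    have hkey2 : (0:ℝ) ≤ c * d * (d^2 - c^2) := by
      nlinarith [mul_nonneg (mul_nonneg hc hd0) (by nlinarith : (0:ℝ) ≤ d^2 - c^2)]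
    nlinarith [mul_le_mul hcoef key hkey2 (by positivity),
      mul_nonneg hcoef2 (by nlinarith : (0:ℝ) ≤ c^2 + d^2 - 2*c^2*d^2 - c*d*(d^2-c^2))]
  have hcont : ContinuousOn (fun a => psi a b c d) (Set.Icc 1 2) := by
    unfold psi; fun_prop
  have := intermediate_value_Icc (by norm_num : (1:ℝ) ≤ 2) hcont
  have h0 : (0:ℝ) ∈ Set.Icc (psi 1 b c d) (psi 2 b c d) := ⟨h1, h2⟩
  obtain ⟨a, ha, hav⟩ := this h0
  exact ⟨a, ha, hav⟩
end

section
/- Let c, d be real numbers with c² ≠ 1 and d² ≠ 1, and let r₁ and r₂ be the 3×3 real matrices r₁ = (1/((1−c²)(1−d²)))·[[cd−1, c(1−cd), d−c],[d−c, 1−cd, cd−1],[0, 1−c², 0]] and r₂ = [[−1−cd, c+d, d(1+cd)],[0, 0, d²−1],[−c−d, 1+cd, 1+cd]]. Then det(r₁·r₂) = 1 and trace(r₁·r₂) = −1. -/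
open Matrix

noncomputable def r1 (c d : ℝ) : Matrix (Fin 3) (Fin 3) ℝ :=
  (1 / ((1 - c^2) * (1 - d^2))) •
    !![c*d - 1, c*(1 - c*d), d - c;
       d - c, 1 - c*d, c*d - 1;
       0, 1 - c^2, 0]

def r2 (c d : ℝ) : Matrix (Fin 3) (Fin 3) ℝ :=
  !![-1 - c*d, c + d, d*(1 + c*d);
     0, 0, d^2 - 1;
     -c - d, 1 + c*d, 1 + c*d]

theorem pappus_product_det_trace (c d : ℝ) (hc : c^2 ≠ 1) (hd : d^2 ≠ 1) :
    (r1 c d * r2 c d).det = 1 ∧ (r1 c d * r2 c d).trace = -1 := by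
  have h1 : (1 - c^2) ≠ 0 := fun h => hc (by linarith [h])
  have h2 : (1 - d^2) ≠ 0 := fun h => hd (by linarith [h])
  constructor
  · simp only [r1, r2, det_fin_three, smul_mul_assoc, Matrix.smul_apply, mul_apply,
      Fin.sum_univ_three, of_apply, cons_val', cons_val_zero, cons_val_one, head_cons,
      head_fin_const, cons_val_two, tail_cons, empty_val', cons_val_fin_one, smul_eq_mul]
    field_simp
    ring
  · simp only [r1, r2, trace_fin_three, smul_mul_assoc, Matrix.smul_apply, mul_apply,
      Fin.sum_univ_three, of_apply, cons_val', cons_val_zero, cons_val_one, head_cons,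
      head_fin_const, cons_val_two, tail_cons, empty_val', cons_val_fin_one, smul_eq_mul]
    field_simp
    ring
end

section
/- Let c, d ∈ (−1,1) and let r₁ = (1/((1−c²)(1−d²)))·[[cd−1, c(1−cd), d−c],[d−c, 1−cd, cd−1],[0, 1−c², 0]] and r₂ = [[−1−cd, c+d, d(1+cd)],[0, 0, d²−1],[−c−d, 1+cd, 1+cd]]. Then trace(r₁·r₂·r₂)³ · (1−c²)(1−d²)² = 64 · det(r₁·r₂·r₂) and trace(r₁·r₁·r₂)³ · (1−c²)²(1−d²) = 64 · det(r₁·r₁·r₂). -/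
/-! Write `r₁ = k • P` with `P` the polynomial matrix inside `r1`. Scaling `r₁` by `k` multiplies
both sides of each identity by the same power of `k` (`k³`, resp. `k⁶`), so it suffices to treat `P`,
and there direct expansion gives `det P = -(1-c²)²(1-d²)`, `det r₂ = -(1-c²)(1-d²)²` and
`tr (P r₂ r₂) = tr (P P r₂) = -4(1-c²)(1-d²)`. -/

open Matrix

def r1Num (c d : ℝ) : Matrix (Fin 3) (Fin 3) ℝ :=
  !![c*d - 1, c*(1 - c*d), d - c;
     d - c, 1 - c*d, c*d - 1;
     0, 1 - c^2, 0]

theorem r1_eq_smul_r1Num (c d : ℝ) : r1 c d = (1 / ((1 - c^2) * (1 - d^2))) • r1Num c d := rfl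

theorem det_r1Num (c d : ℝ) : (r1Num c d).det = -((1 - c^2)^2 * (1 - d^2)) := by
  simp only [r1Num, det_fin_three, of_apply, cons_val', cons_val_zero, cons_val_one, cons_val,
    cons_val_fin_one]
  ring

theorem det_r2 (c d : ℝ) : (r2 c d).det = -((1 - c^2) * (1 - d^2)^2) := by
  simp only [r2, det_fin_three, of_apply, cons_val', cons_val_zero, cons_val_one, cons_val,
    cons_val_fin_one]
  ring

theorem trace_r1Num_mul_r2_mul_r2 (c d : ℝ) :
    (r1Num c d * r2 c d * r2 c d).trace = -4 * ((1 - c^2) * (1 - d^2)) := by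
  simp only [r1Num, r2, trace_fin_three, mul_apply, Fin.sum_univ_three, of_apply, cons_val',
    cons_val_zero, cons_val_one, cons_val, cons_val_fin_one]
  ring

theorem trace_r1Num_mul_r1Num_mul_r2 (c d : ℝ) :
    (r1Num c d * r1Num c d * r2 c d).trace = -4 * ((1 - c^2) * (1 - d^2)) := by
  simp only [r1Num, r2, trace_fin_three, mul_apply, Fin.sum_univ_three, of_apply, cons_val',
    cons_val_zero, cons_val_one, cons_val, cons_val_fin_one]
  ring

theorem pappus_tau_formulas_general (c d : ℝ) :
    (r1 c d * r2 c d * r2 c d).trace ^ 3 * ((1 - c^2) * (1 - d^2)^2)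
        = 64 * (r1 c d * r2 c d * r2 c d).det ∧
    (r1 c d * r1 c d * r2 c d).trace ^ 3 * ((1 - c^2)^2 * (1 - d^2))
        = 64 * (r1 c d * r1 c d * r2 c d).det := by
  simp only [r1_eq_smul_r1Num, Matrix.smul_mul, Matrix.mul_smul, smul_smul, trace_smul, det_smul,
    det_mul, Fintype.card_fin, smul_eq_mul, trace_r1Num_mul_r2_mul_r2, trace_r1Num_mul_r1Num_mul_r2,
    det_r1Num, det_r2]
  constructor <;> ring

theorem pappus_tau_formulas (c d : ℝ)
    (hc : c ∈ Set.Ioo (-1 : ℝ) 1) (hd : d ∈ Set.Ioo (-1 : ℝ) 1) :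
    (r1 c d * r2 c d * r2 c d).trace ^ 3 * ((1 - c^2) * (1 - d^2)^2)
        = 64 * (r1 c d * r2 c d * r2 c d).det ∧
    (r1 c d * r1 c d * r2 c d).trace ^ 3 * ((1 - c^2)^2 * (1 - d^2))
        = 64 * (r1 c d * r1 c d * r2 c d).det :=
  pappus_tau_formulas_general c d
end

section
/- Let c, d ∈ (−1,1) and let r₁ = (1/((1−c²)(1−d²)))·[[cd−1, c(1−cd), d−c],[d−c, 1−cd, cd−1],[0, 1−c², 0]] and r₂ = [[−1−cd, c+d, d(1+cd)],[0, 0, d²−1],[−c−d, 1+cd, 1+cd]]. Then trace(r₂·r₁·r₂²·r₁²) − trace(r₁·r₂·r₁²·r₂²) = 16cd/((1−c²)(1−d²)). -/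
/-!
`r₁` is `D⁻¹` times a polynomial matrix, where `D = (1 - c²)(1 - d²)`, and both words
`x y x² y²` and `y x y² x²` are homogeneous of degree 3 in `r₁`. So the trace difference is
`D⁻³` times the same difference for the polynomial matrix and `r₂`, which expands to the
polynomial `16 c d D²`.
-/

open Matrix

namespace Matrix

variable {n R : Type*} [Fintype n] [DecidableEq n] [CommRing R]

/-- The trace of the paper's commutator `[x, y] = x y x² y²`. -/
def commutatorTrace (x y : Matrix n n R) : R := (x * y * x ^ 2 * y ^ 2).trace

theorem commutatorTrace_smul_left (k : R) (x y : Matrix n n R) :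
    commutatorTrace (k • x) y = k ^ 3 * commutatorTrace x y := by
  simp only [commutatorTrace, smul_pow, Matrix.smul_mul, Matrix.mul_smul, trace_smul, smul_eq_mul]
  ring

theorem commutatorTrace_smul_right (k : R) (x y : Matrix n n R) :
    commutatorTrace x (k • y) = k ^ 3 * commutatorTrace x y := by
  simp only [commutatorTrace, smul_pow, Matrix.smul_mul, Matrix.mul_smul, trace_smul, smul_eq_mul]
  ring

end Matrix

def r1Numerator (c d : ℝ) : Matrix (Fin 3) (Fin 3) ℝ :=
  !![c*d - 1, c*(1 - c*d), d - c;
     d - c, 1 - c*d, c*d - 1;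
     0, 1 - c^2, 0]

theorem r1_eq_smul (c d : ℝ) : r1 c d = ((1 - c^2) * (1 - d^2))⁻¹ • r1Numerator c d := by
  rw [r1, one_div, r1Numerator]

theorem commutatorTrace_r2_r1Numerator_sub (c d : ℝ) :
    commutatorTrace (r2 c d) (r1Numerator c d) - commutatorTrace (r1Numerator c d) (r2 c d)
      = 16 * c * d * ((1 - c^2) * (1 - d^2)) ^ 2 := by
  simp only [commutatorTrace, r2, r1Numerator, pow_two, mul_fin_three, trace_fin_three_of]
  ring

theorem pappus_commutator_trace_difference_general (c d : ℝ) :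
    (r2 c d * r1 c d * (r2 c d)^2 * (r1 c d)^2).trace
      - (r1 c d * r2 c d * (r1 c d)^2 * (r2 c d)^2).trace
      = 16*c*d / ((1 - c^2) * (1 - d^2)) := by
  change commutatorTrace (r2 c d) (r1 c d) - commutatorTrace (r1 c d) (r2 c d) = _
  rw [r1_eq_smul, commutatorTrace_smul_right, commutatorTrace_smul_left, ← mul_sub,
    commutatorTrace_r2_r1Numerator_sub, div_eq_mul_inv]
  generalize (1 - c ^ 2) * (1 - d ^ 2) = D
  rcases eq_or_ne D 0 with hD | hD
  · simp [hD]
  · field_simp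

theorem pappus_commutator_trace_difference (c d : ℝ)
    (hc : c ∈ Set.Ioo (-1 : ℝ) 1) (hd : d ∈ Set.Ioo (-1 : ℝ) 1) :
    (r2 c d * r1 c d * (r2 c d)^2 * (r1 c d)^2).trace
      - (r1 c d * r2 c d * (r1 c d)^2 * (r2 c d)^2).trace
      = 16*c*d / ((1 - c^2) * (1 - d^2)) :=
  pappus_commutator_trace_difference_general c d
end
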